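/- Let ε > 0 and let f : ℝ → ℝ be a function satisfying |f(x + y) − f(x) − f(y)| ≤ ε for all x, y ∈ ℝ, and such that the mapping x ↦ f(cos(x)) + sin(x)·f(x) is locally bounded on ℝ. Then there exist a real number λ and a real derivation χ : ℝ → ℝ such that |f(x) − (χ(x) + λ·x)| ≤ ε for all x ∈ ℝ. -/

import Mathlib

open Real Set

/-- A function `φ` is locally bounded on a set `s` if every point of `s` has a
neighborhood (within `s`) on which `φ` is bounded. -/
def LocallyBoundedOn (φ : ℝ → ℝ) (s : Set ℝ) : Prop :=
  ∀ x ∈ s, ∃ C : ℝ, ∀ᶠ y in nhdsWithin x s, |φ y| ≤ C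

/-- A real-valued function is *regular* on its domain `s` if it is locally bounded,
or continuous, or Lebesgue measurable on `s`. -/
def RegularOn (φ : ℝ → ℝ) (s : Set ℝ) : Prop :=
  LocallyBoundedOn φ s ∨ ContinuousOn φ s ∨ Measurable (s.restrict φ)

/-- A real derivation: an additive function satisfying the Leibniz rule. -/
def IsRealDerivation (χ : ℝ → ℝ) : Prop :=
  (∀ x y : ℝ, χ (x + y) = χ x + χ y) ∧ (∀ x y : ℝ, χ (x * y) = x * χ y + y * χ x)

open Filter Topology

/-!
By Hyers' theorem `f` lies within `ε` of an additive `g`, and `x ↦ g (cos x) + sin x * g x` is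
still locally bounded. For additive `g` the Leibniz defect `B x y = g (x * y) - x * g y - y * g x`
is symmetric and additive in each argument, and `2 * B (sin x) (sin x)` is a combination of values
of that map near `0` and near `π / 2`; so `t ↦ B t t` is bounded near `0`. Polarization bounds `B`
near the origin, and an additive map `ℝ → ℝ` bounded near `0` is linear, whence
`B x y = -(x * y * g 1)`: `g - g 1 • id` is a derivation.
-/

theorem AddMonoidHom.exists_norm_sub_le_of_norm_map_add_sub_le {G F : Type*} [AddCommMonoid G]
    [NormedAddCommGroup F] [NormedSpace ℝ F] [CompleteSpace F] {ε : ℝ} (f : G → F)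
    (hf : ∀ x y, ‖f (x + y) - f x - f y‖ ≤ ε) :
    ∃ g : G →+ F, ∀ x, ‖f x - g x‖ ≤ ε := by
  set u : G → ℕ → F := fun x n => (2⁻¹ : ℝ) ^ n • f (2 ^ n • x)
  have hu_dist : ∀ x n, dist (u x n) (u x (n + 1)) ≤ ε / 2 * 2⁻¹ ^ n := by
    intro x n
    have hsucc : u x n - u x (n + 1) =
        -((2⁻¹ : ℝ) ^ (n + 1) • (f (2 ^ n • x + 2 ^ n • x) - f (2 ^ n • x) - f (2 ^ n • x))) := by
      simp only [u, pow_succ, mul_nsmul, two_nsmul]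
      module
    rw [dist_eq_norm, hsucc, norm_neg, norm_smul, norm_pow, norm_inv, Real.norm_two]
    calc (2⁻¹ : ℝ) ^ (n + 1) * ‖_‖ ≤ 2⁻¹ ^ (n + 1) * ε := by gcongr; exact hf _ _
      _ = ε / 2 * 2⁻¹ ^ n := by ring
  choose g hg using fun x => cauchySeq_tendsto_of_complete
    (cauchySeq_of_le_geometric _ _ (by norm_num) (hu_dist x))
  have hg_add : ∀ x y, g (x + y) = g x + g y := by
    intro x y
    have hdefect : Tendsto (fun n => u (x + y) n - u x n - u y n) atTop (𝓝 0) := by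
      refine squeeze_zero_norm (a := fun n => 2⁻¹ ^ n * ε) (fun n => ?_) ?_
      · simp only [u, nsmul_add, ← smul_sub, norm_smul, norm_pow, norm_inv, Real.norm_two]
        gcongr
        exact hf _ _
      · simpa using (tendsto_pow_atTop_nhds_zero_of_lt_one (r := (2⁻¹ : ℝ)) (by norm_num)
          (by norm_num)).mul_const ε
    have := tendsto_nhds_unique (((hg (x + y)).sub (hg x)).sub (hg y)) hdefect
    rwa [sub_sub, sub_eq_zero] at this
  refine ⟨AddMonoidHom.mk' g hg_add, fun x => ?_⟩
  calc ‖f x - g x‖ = dist (u x 0) (g x) := by simp [u, dist_eq_norm]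
    _ ≤ ε / 2 / (1 - 2⁻¹) :=
      dist_le_of_le_geometric_of_tendsto₀ _ _ (by norm_num) (hu_dist x) (hg x)
    _ = ε := by ring

theorem AddMonoidHom.apply_eq_mul_apply_one_of_eventually_abs_le (A : ℝ →+ ℝ) {C : ℝ}
    (h : ∀ᶠ y in 𝓝 0, |A y| ≤ C) (y : ℝ) : A y = y * A 1 := by
  have hA : Continuous A := A.continuous_of_isBounded_nhds_zero h <|
    (Metric.isBounded_iff_subset_closedBall 0).2 ⟨C, by rintro _ ⟨y, hy, rfl⟩; simpa using hy⟩
  simpa using map_real_smul A hA y 1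

noncomputable def cosSinForm (g : ℝ → ℝ) (x : ℝ) : ℝ := g (cos x) + sin x * g x

theorem abs_cosSinForm_sub_le {f g : ℝ → ℝ} {ε : ℝ} (h : ∀ x, |f x - g x| ≤ ε) (x : ℝ) :
    |cosSinForm f x - cosSinForm g x| ≤ 2 * ε := by
  have hsin : |sin x * (f x - g x)| ≤ ε := by
    rw [abs_mul]
    exact (mul_le_of_le_one_left (abs_nonneg _) (abs_sin_le_one x)).trans (h x)
  calc |cosSinForm f x - cosSinForm g x|
      = |(f (cos x) - g (cos x)) + sin x * (f x - g x)| := by simp only [cosSinForm]; ring_nf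
    _ ≤ ε + ε := (abs_add_le _ _).trans (add_le_add (h _) hsin)
    _ = 2 * ε := by ring

def leibnizDefect (g : ℝ →+ ℝ) (x y : ℝ) : ℝ := g (x * y) - x * g y - y * g x

namespace leibnizDefect

variable (g : ℝ →+ ℝ)

theorem comm (x y : ℝ) : leibnizDefect g x y = leibnizDefect g y x := by
  simp only [leibnizDefect, mul_comm x y]; ring

theorem add_right (x y z : ℝ) :
    leibnizDefect g x (y + z) = leibnizDefect g x y + leibnizDefect g x z := by
  simp only [leibnizDefect, mul_add, map_add]; ring

theorem one_right (x : ℝ) : leibnizDefect g x 1 = -(x * g 1) := by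
  simp only [leibnizDefect, mul_one]; ring

theorem add_self_add (x y : ℝ) : leibnizDefect g (x + y) (x + y) =
    leibnizDefect g x x + 2 * leibnizDefect g x y + leibnizDefect g y y := by
  simp only [leibnizDefect, add_mul, mul_add, map_add, mul_comm y x]; ring

theorem two_mul_sin_sin (x : ℝ) : 2 * leibnizDefect g (sin x) (sin x) =
    cosSinForm g 0 - cosSinForm g (2 * x) +
      2 * sin x * (cosSinForm g (x + π / 2) - cosSinForm g (π / 2 - x)) := by
  have hcos2 : cos (2 * x) = cos x * cos x - sin x * sin x := by
    rw [cos_two_mul, ← cos_sq_add_sin_sq x]; ring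
  have hcos0 : cos 0 = cos x * cos x + sin x * sin x := by
    rw [cos_zero, ← cos_sq_add_sin_sq x]; ring
  simp only [leibnizDefect, cosSinForm]
  rw [hcos2, hcos0, sin_two_mul, two_mul x]
  simp only [sin_zero, cos_add_pi_div_two, sin_add_pi_div_two, cos_pi_div_two_sub,
    sin_pi_div_two_sub, map_add, map_sub, map_neg]
  ring

theorem eventually_abs_self_le {C₀ C₁ : ℝ} (h₀ : ∀ᶠ x in 𝓝 0, |cosSinForm g x| ≤ C₀)
    (h₁ : ∀ᶠ x in 𝓝 (π / 2), |cosSinForm g x| ≤ C₁) :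
    ∃ M, ∀ᶠ t in 𝓝 0, |leibnizDefect g t t| ≤ M := by
  have hsin : ∀ᶠ x in 𝓝 0,
      |leibnizDefect g (sin x) (sin x)| ≤ (|cosSinForm g 0| + C₀ + 4 * C₁) / 2 := by
    have h₂ := ((continuous_const_mul 2).tendsto' 0 0 (mul_zero 2)).eventually h₀
    have hadd := ((continuous_add_const (π / 2)).tendsto' 0 (π / 2) (zero_add _)).eventually h₁
    have hsub := ((continuous_sub_left (π / 2)).tendsto' 0 (π / 2) (sub_zero _)).eventually h₁
    filter_upwards [h₂, hadd, hsub] with x h₂ hadd hsub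
    have hprod : |sin x * (cosSinForm g (x + π / 2) - cosSinForm g (π / 2 - x))| ≤ 2 * C₁ := by
      rw [abs_mul]
      exact (mul_le_of_le_one_left (abs_nonneg _) (abs_sin_le_one x)).trans
        ((abs_sub _ _).trans (by linarith))
    have hid := two_mul_sin_sin g x
    rw [abs_le] at h₂ hprod ⊢
    constructor <;> linarith [neg_abs_le (cosSinForm g 0), le_abs_self (cosSinForm g 0)]
  have harcsin : Tendsto arcsin (𝓝 0) (𝓝 0) := continuous_arcsin.tendsto' 0 0 arcsin_zero
  refine ⟨(|cosSinForm g 0| + C₀ + 4 * C₁) / 2, ?_⟩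
  filter_upwards [harcsin.eventually hsin, Icc_mem_nhds (neg_lt_zero.2 one_pos) one_pos]
    with t ht ht'
  rwa [sin_arcsin ht'.1 ht'.2] at ht

theorem eq_of_eventually_abs_le_right (x : ℝ) {C : ℝ}
    (h : ∀ᶠ y in 𝓝 0, |leibnizDefect g x y| ≤ C) (y : ℝ) :
    leibnizDefect g x y = -(x * y * g 1) := by
  have := (AddMonoidHom.mk' (leibnizDefect g x) (add_right g x)
    ).apply_eq_mul_apply_one_of_eventually_abs_le h y
  simp only [AddMonoidHom.mk'_apply, one_right] at this
  rw [this]; ring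

theorem eq_of_eventually_abs_self_le {M : ℝ} (h : ∀ᶠ t in 𝓝 0, |leibnizDefect g t t| ≤ M)
    (x y : ℝ) : leibnizDefect g x y = -(x * y * g 1) := by
  obtain ⟨r, hr, hball⟩ := Metric.eventually_nhds_iff_ball.1 h
  have hsmall : ∀ t ∈ Metric.ball (0 : ℝ) (r / 2), ∀ y,
      leibnizDefect g t y = -(t * y * g 1) := by
    intro t ht
    refine eq_of_eventually_abs_le_right g t (C := 3 * M / 2) ?_
    filter_upwards [Metric.ball_mem_nhds 0 (half_pos hr)] with s hs
    rw [mem_ball_zero_iff, Real.norm_eq_abs] at ht hs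
    have hts := hball (t + s) <| by
      rw [mem_ball_zero_iff, Real.norm_eq_abs]; linarith [abs_add_le t s]
    have ht' := hball t (by rw [mem_ball_zero_iff, Real.norm_eq_abs]; linarith)
    have hs' := hball s (by rw [mem_ball_zero_iff, Real.norm_eq_abs]; linarith)
    have hpol := add_self_add g t s
    rw [abs_le] at hts ht' hs' ⊢
    constructor <;> linarith
  refine eq_of_eventually_abs_le_right g x (C := |x * g 1|) ?_ y
  filter_upwards [Metric.ball_mem_nhds 0 (half_pos hr), Metric.ball_mem_nhds 0 one_pos]
    with s hs hs₁
  rw [comm, hsmall s hs x, abs_neg, mul_assoc, abs_mul]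
  rw [mem_ball_zero_iff, Real.norm_eq_abs] at hs₁
  exact mul_le_of_le_one_left (abs_nonneg _) hs₁.le

theorem isRealDerivation_sub_mul (h : ∀ x y, leibnizDefect g x y = -(x * y * g 1)) :
    IsRealDerivation (fun x => g x - g 1 * x) := by
  refine ⟨fun x y => by simp only [map_add]; ring, fun x y => ?_⟩
  have := h x y
  simp only [leibnizDefect] at this
  linear_combination this

end leibnizDefect

theorem stmt_13_general (ε : ℝ) (f : ℝ → ℝ)
    (hf : ∀ x y : ℝ, |f (x + y) - f x - f y| ≤ ε)
    (hlb : LocallyBoundedOn (fun x : ℝ => f (Real.cos x) + Real.sin x * f x) Set.univ) :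
    ∃ (l : ℝ) (χ : ℝ → ℝ), IsRealDerivation χ ∧
      ∀ x : ℝ, |f x - (χ x + l * x)| ≤ ε := by
  obtain ⟨g, hfg⟩ := AddMonoidHom.exists_norm_sub_le_of_norm_map_add_sub_le f hf
  have hψ (a : ℝ) : ∃ C, ∀ᶠ x in 𝓝 a, |cosSinForm g x| ≤ C := by
    obtain ⟨C, hC⟩ := hlb a (mem_univ a)
    rw [nhdsWithin_univ] at hC
    refine ⟨C + 2 * ε, hC.mono fun x hx => ?_⟩
    have hfx : |cosSinForm f x| ≤ C := hx
    have hgx := abs_sub_abs_le_abs_sub (cosSinForm g x) (cosSinForm f x)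
    rw [abs_sub_comm] at hgx
    linarith [abs_cosSinForm_sub_le hfg x]
  obtain ⟨C₀, h₀⟩ := hψ 0
  obtain ⟨C₁, h₁⟩ := hψ (π / 2)
  obtain ⟨M, hM⟩ := leibnizDefect.eventually_abs_self_le g h₀ h₁
  refine ⟨g 1, fun x => g x - g 1 * x,
    leibnizDefect.isRealDerivation_sub_mul g (leibnizDefect.eq_of_eventually_abs_self_le g hM),
    fun x => ?_⟩
  simpa using hfg x

theorem stmt_13 (ε : ℝ) (hε : 0 < ε) (f : ℝ → ℝ)
    (hf : ∀ x y : ℝ, |f (x + y) - f x - f y| ≤ ε)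
    (hlb : LocallyBoundedOn (fun x : ℝ => f (Real.cos x) + Real.sin x * f x) Set.univ) :
    ∃ (l : ℝ) (χ : ℝ → ℝ), IsRealDerivation χ ∧
      ∀ x : ℝ, |f x - (χ x + l * x)| ≤ ε :=
  stmt_13_general ε f hf hlb
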